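/- Let G be a connected non-complete graph and u,v a pair of vertices maximizing |I(u,v)|. If a vertex w of G is a weakly toll extreme vertex of G, then w is a true twin of u or a true twin of v (or equals u or v). -/

import Mathlib

/-!
A weakly toll extreme vertex `w` is simplicial, and a weakly toll walk between two vertices
outside `N[w]` never meets `N(w)`: a detour `x w x` at a neighbour `x` would put `w` on a weakly
toll walk. Since `|I(u,v)| ≥ 3`, the vertices `u` and `v` are distinct and nonadjacent.

If `w ∼ u`, then `w ≁ v`, and every weakly toll `(u,v)`-walk can be rerouted to start at `w`
(cutting out its returns to `u` if `w` is adjacent to its second vertex). So `u ∈ I(w,v)` would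
give `I(u,v) ⊊ I(w,v)`, contradicting maximality; but a neighbour `t` of `u` outside `N[w]`
yields exactly that, through the walk `w u t P` with `P` a shortest `(t,v)`-walk. Hence
`N[u] = N[w]`.

If `w` is adjacent to neither, let `R` be a shortest walk from `w` to `N(u) ∪ N(v)`, ending at
`s`. If `s` is a common neighbour, `u s R⁻¹ R s v` is a weakly toll walk through `w`. If, say,
only `s ∼ u`, then prefixing `R s u` to the weakly toll `(u,v)`-walks gives `I(u,v) ⊊ I(w,v)`.
-/

open SimpleGraph

variable {V : Type*}

/-- Closed neighborhood N[x]. -/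
def closedNbhd (G : SimpleGraph V) (x : V) : Set V := insert x (G.neighborSet x)

/-- The true-twin class of `x`: vertices with the same closed neighborhood. -/
def twinClass (G : SimpleGraph V) (x : V) : Set V :=
  {y | closedNbhd G y = closedNbhd G x}

/-- A weakly toll walk between distinct nonadjacent endpoints: the first endpoint is
adjacent only to the second vertex of the walk, and the last endpoint only to the
second-to-last vertex. -/
def IsWeaklyTollWalk (G : SimpleGraph V) {u w : V} (p : G.Walk u w) : Prop :=
  u ≠ w ∧ ¬ G.Adj u w ∧
  (∀ x ∈ p.support, G.Adj u x → x = p.getVert 1) ∧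
  (∀ x ∈ p.support, G.Adj x w → x = p.getVert (p.length - 1))

/-- The weakly toll interval of a set. -/
def wtInterval (G : SimpleGraph V) (S : Set V) : Set V :=
  S ∪ {x | ∃ u ∈ S, ∃ w ∈ S, ∃ p : G.Walk u w, IsWeaklyTollWalk G p ∧ x ∈ p.support}

/-- Weakly toll convex set. -/
def WTConvex (G : SimpleGraph V) (S : Set V) : Prop := wtInterval G S = S

/-- The weakly toll convex hull. -/
def wtHull (G : SimpleGraph V) (S : Set V) : Set V :=
  ⋂₀ {T : Set V | S ⊆ T ∧ WTConvex G T}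

/-- The weakly toll interval number. -/
noncomputable def wtn (G : SimpleGraph V) [Fintype V] : ℕ :=
  sInf {n | ∃ S : Finset V, S.card = n ∧ wtInterval G ↑S = Set.univ}

/-- The weakly toll hull number. -/
noncomputable def wth (G : SimpleGraph V) [Fintype V] : ℕ :=
  sInf {n | ∃ S : Finset V, S.card = n ∧ wtHull G ↑S = Set.univ}

/-- `S` separates some pair of vertices of `G`. -/
def IsSeparator (G : SimpleGraph V) (S : Set V) : Prop :=
  ∃ a, ∃ ha : a ∈ (Sᶜ : Set V), ∃ b, ∃ hb : b ∈ (Sᶜ : Set V),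
    G.Reachable a b ∧ ¬ (G.induce (Sᶜ : Set V)).Reachable ⟨a, ha⟩ ⟨b, hb⟩

/-- A clique separator. -/
def IsCliqueSeparator (G : SimpleGraph V) (S : Set V) : Prop :=
  G.IsClique S ∧ IsSeparator G S

/-- A graph is prime if it has no clique separator. -/
def IsPrime (G : SimpleGraph V) : Prop := ∀ S : Set V, ¬ IsCliqueSeparator G S

/-- Maximal prime subgraph (given by its vertex set). -/
def IsMPSubgraph (G : SimpleGraph V) (M : Set V) : Prop :=
  IsPrime (G.induce M) ∧ ∀ M' : Set V, M ⊆ M' → IsPrime (G.induce M') → M' = M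

/-- Extremal mp-subgraph. -/
def IsExtremalMP (G : SimpleGraph V) (M : Set V) : Prop :=
  IsMPSubgraph G M ∧ ∃ M', IsMPSubgraph G M' ∧ M' ≠ M ∧
    ∀ M'', IsMPSubgraph G M'' → M'' ≠ M → M ∩ M'' ⊆ M ∩ M'

/-- Vertices of `M` shared with another mp-subgraph. -/
def Sh (G : SimpleGraph V) (M : Set V) : Set V :=
  {v | v ∈ M ∧ ∃ M', IsMPSubgraph G M' ∧ M' ≠ M ∧ v ∈ M'}

/-- Vertices exclusive to `M`. -/
def Exc (G : SimpleGraph V) (M : Set V) : Set V := M \ Sh G M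

/-- Induced path: a path with no chords. -/
def IsInducedPath (G : SimpleGraph V) {u v : V} (p : G.Walk u v) : Prop :=
  p.IsPath ∧ ∀ i j : ℕ, i + 1 < j → j ≤ p.length → ¬ G.Adj (p.getVert i) (p.getVert j)

/-- Monophonic interval. -/
def monoInterval (G : SimpleGraph V) (S : Set V) : Set V :=
  S ∪ {x | ∃ u ∈ S, ∃ w ∈ S, ∃ p : G.Walk u w, IsInducedPath G p ∧ x ∈ p.support}

/-- Monophonically convex set. -/
def MonoConvex (G : SimpleGraph V) (S : Set V) : Prop := monoInterval G S = S

/-- Monophonic hull. -/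
def monoHull (G : SimpleGraph V) (S : Set V) : Set V :=
  ⋂₀ {T : Set V | S ⊆ T ∧ MonoConvex G T}

section

variable {G : SimpleGraph V}

namespace SimpleGraph.Walk

theorem eq_snd_of_adj_of_length_eq_dist {a b x : V} {p : G.Walk a b}
    (hp : p.length = G.dist a b) (hx : x ∈ p.support) (hax : G.Adj a x) : x = p.snd := by
  classical
  have hsplit := congrArg length (p.take_spec hx)
  have hshort := G.dist_le (cons hax (p.dropUntil x hx))
  have hpos : (p.takeUntil x hx).length ≠ 0 := fun h => hax.ne <| by
    rw [← p.getVert_length_takeUntil hx, h, getVert_zero]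
  have hone : (p.takeUntil x hx).length = 1 := by
    rw [length_append] at hsplit
    rw [length_cons] at hshort
    omega
  rw [← p.getVert_length_takeUntil hx, hone]

theorem eq_penultimate_of_adj_of_length_eq_dist {a b x : V} {p : G.Walk a b}
    (hp : p.length = G.dist a b) (hx : x ∈ p.support) (hxb : G.Adj x b) :
    x = p.penultimate := by
  have := p.reverse.eq_snd_of_adj_of_length_eq_dist (by rw [length_reverse, hp, dist_comm])
    (by rwa [support_reverse, List.mem_reverse]) hxb.symm
  rwa [snd, getVert_reverse] at this

/-- Every visit of `p` to `a` is a detour `z a z`, which can be cut out. -/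
theorem exists_support_eq_diff {a z : V} : ∀ {c b : V} (p : G.Walk c b), c ≠ a → b ≠ a →
    (∀ x ∈ p.support, G.Adj a x → x = z) →
    ∃ q : G.Walk c b, ∀ x, x ∈ q.support ↔ x ∈ p.support ∧ x ≠ a
  | _, _, nil, hc, _, _ => ⟨nil, fun x => by simp only [support_nil, List.mem_singleton]; grind⟩
  | c, b, cons (v := d) h p, hc, hb, hz => by
    by_cases hd : d = a
    · subst hd
      cases p with
      | nil => exact absurd rfl hb
      | cons h' p =>
        have hcz : c = z := hz c (by simp) h.symm
        obtain rfl : _ = c := (hz _ (by simp) h').trans hcz.symm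
        obtain ⟨q, hq⟩ := exists_support_eq_diff p hc hb (fun x hx => hz x (by simp [hx]))
        refine ⟨q, fun x => ?_⟩
        simp only [hq, support_cons, List.mem_cons]
        have := p.start_mem_support
        grind
    · obtain ⟨q, hq⟩ := exists_support_eq_diff p hd hb (fun x hx => hz x (by simp [hx]))
      refine ⟨cons h q, fun x => ?_⟩
      simp only [hq, support_cons, List.mem_cons]
      grind

end SimpleGraph.Walk

open SimpleGraph.Walk

theorem isWeaklyTollWalk_of_forall_adj_eq {a b y z : V} {p : G.Walk a b} (hne : a ≠ b)
    (hnadj : ¬ G.Adj a b) (hy : ∀ x ∈ p.support, G.Adj a x → x = y)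
    (hz : ∀ x ∈ p.support, G.Adj x b → x = z) : IsWeaklyTollWalk G p := by
  have hp : ¬ p.Nil := not_nil_of_ne hne
  refine ⟨hne, hnadj, fun x hx hax => ?_, fun x hx hxb => ?_⟩
  · rw [hy x hx hax, hy _ (p.getVert_mem_support 1) (p.adj_snd hp)]
  · rw [hz x hx hxb, hz _ (p.getVert_mem_support _) (p.adj_penultimate hp)]

theorem isWeaklyTollWalk_cons_of_forall_adj_eq {a c b y z : V} (h : G.Adj a c)
    {q : G.Walk c b} (hne : a ≠ b) (hnadj : ¬ G.Adj a b)
    (hy : ∀ x ∈ q.support, G.Adj a x → x = y) (hz : ∀ x ∈ q.support, G.Adj x b → x = z) :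
    IsWeaklyTollWalk G (cons h q) := by
  refine isWeaklyTollWalk_of_forall_adj_eq (y := y) (z := z) hne hnadj
    (fun x hx hax => ?_) (fun x hx hxb => ?_) <;>
  rw [support_cons, List.mem_cons] at hx <;> rcases hx with rfl | hx
  · exact absurd hax (G.loopless.irrefl _)
  · exact hy x hx hax
  · exact absurd hxb hnadj
  · exact hz x hx hxb

theorem isWeaklyTollWalk_of_length_eq_dist {a b : V} {p : G.Walk a b}
    (hp : p.length = G.dist a b) (hne : a ≠ b) (hnadj : ¬ G.Adj a b) : IsWeaklyTollWalk G p :=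
  isWeaklyTollWalk_of_forall_adj_eq hne hnadj
    (fun _ hx => eq_snd_of_adj_of_length_eq_dist hp hx)
    (fun _ hx => eq_penultimate_of_adj_of_length_eq_dist hp hx)

theorem IsWeaklyTollWalk.reverse {a b : V} {p : G.Walk a b} (hp : IsWeaklyTollWalk G p) :
    IsWeaklyTollWalk G p.reverse := by
  obtain ⟨hne, hnadj, hfirst, hlast⟩ := hp
  refine isWeaklyTollWalk_of_forall_adj_eq hne.symm (fun h => hnadj h.symm)
    (fun x hx hbx => hlast x ?_ hbx.symm) (fun x hx hxa => hfirst x ?_ hxa.symm) <;>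
  simpa using hx

theorem mem_wtInterval_pair {a b x : V} : x ∈ wtInterval G {a, b} ↔
    x = a ∨ x = b ∨ ∃ p : G.Walk a b, IsWeaklyTollWalk G p ∧ x ∈ p.support := by
  constructor
  · rintro (hx | ⟨c, hc, d, hd, p, hp, hx⟩)
    · exact Or.imp_right Or.inl (by simpa using hx)
    · simp only [Set.mem_insert_iff, Set.mem_singleton_iff] at hc hd
      rcases hc with rfl | rfl <;> rcases hd with rfl | rfl
      · exact absurd rfl hp.1
      · exact Or.inr (Or.inr ⟨p, hp, hx⟩)
      · exact Or.inr (Or.inr ⟨p.reverse, hp.reverse, by simpa using hx⟩)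
      · exact absurd rfl hp.1
  · rintro (rfl | rfl | ⟨p, hp, hx⟩)
    · exact Or.inl (by simp)
    · exact Or.inl (by simp)
    · exact Or.inr ⟨a, by simp, b, by simp, p, hp, hx⟩

theorem mem_wtInterval_of_mem_support {a b x : V} {p : G.Walk a b} (hp : IsWeaklyTollWalk G p)
    (hx : x ∈ p.support) : x ∈ wtInterval G {a, b} :=
  mem_wtInterval_pair.mpr (Or.inr (Or.inr ⟨p, hp, hx⟩))

theorem three_le_ncard_wtInterval [Finite V] {a b : V} (hab : G.Reachable a b) (hne : a ≠ b)
    (hnadj : ¬ G.Adj a b) : 3 ≤ (wtInterval G {a, b}).ncard := by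
  obtain ⟨p, hp⟩ := hab.exists_walk_length_eq_dist
  have hwt := isWeaklyTollWalk_of_length_eq_dist hp hne hnadj
  have hsnd : G.Adj a p.snd := p.adj_snd (not_nil_of_ne hne)
  have hsub : ({a, p.snd, b} : Set V) ⊆ wtInterval G {a, b} := by
    rintro x (rfl | rfl | rfl)
    · exact mem_wtInterval_pair.mpr (Or.inl rfl)
    · exact mem_wtInterval_of_mem_support hwt (p.getVert_mem_support 1)
    · exact mem_wtInterval_pair.mpr (Or.inr (Or.inl rfl))
  calc 3 = ({a, p.snd, b} : Set V).ncard :=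
        (Set.ncard_eq_three.mpr ⟨a, p.snd, b, hsnd.ne, hne, fun h => hnadj (h ▸ hsnd), rfl⟩).symm
    _ ≤ _ := Set.ncard_le_ncard hsub

theorem ne_and_not_adj_of_two_lt_ncard_wtInterval {a b : V}
    (h : 2 < (wtInterval G {a, b}).ncard) : a ≠ b ∧ ¬ G.Adj a b := by
  by_contra! hab
  have hsub : wtInterval G {a, b} ⊆ {a, b} := by
    intro x hx
    rcases mem_wtInterval_pair.mp hx with rfl | rfl | ⟨p, hp, -⟩
    · simp
    · simp
    · exact absurd (hab hp.1) hp.2.1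
  have := (Set.ncard_le_ncard hsub).trans (Set.ncard_insert_le a {b})
  rw [Set.ncard_singleton] at this
  omega

section Extreme

variable {w : V} (hw : WTConvex G ({w}ᶜ : Set V))
include hw

theorem notMem_support_of_wtConvex_compl {a b : V} (ha : a ≠ w) (hb : b ≠ w)
    {p : G.Walk a b} (hp : IsWeaklyTollWalk G p) : w ∉ p.support := fun hwp => by
  have : w ∈ wtInterval G ({w}ᶜ : Set V) := Or.inr ⟨a, ha, b, hb, p, hp, hwp⟩
  rw [hw] at this
  exact this rfl

theorem notMem_wtInterval_of_wtConvex_compl {a b : V} (ha : a ≠ w) (hb : b ≠ w) :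
    w ∉ wtInterval G {a, b} := by
  rw [mem_wtInterval_pair]
  rintro (rfl | rfl | ⟨p, hp, hwp⟩)
  · exact ha rfl
  · exact hb rfl
  · exact notMem_support_of_wtConvex_compl hw ha hb hp hwp

theorem isClique_neighborSet_of_wtConvex_compl : G.IsClique (G.neighborSet w) := by
  rintro a (hwa : G.Adj w a) b (hwb : G.Adj w b) hab
  by_contra hnadj
  have hsupp : ∀ x ∈ (cons hwa.symm (cons hwb nil)).support, x = a ∨ x = w ∨ x = b := by simp
  have hp : IsWeaklyTollWalk G (cons hwa.symm (cons hwb nil)) :=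
    isWeaklyTollWalk_of_forall_adj_eq (y := w) (z := w) hab hnadj
      (fun x hx hax => by rcases hsupp x hx with rfl | rfl | rfl <;> simp_all)
      (fun x hx hxb => by rcases hsupp x hx with rfl | rfl | rfl <;> simp_all)
  exact notMem_support_of_wtConvex_compl hw hwa.ne' hwb.ne' hp (by simp)

theorem not_adj_of_mem_support_of_wtConvex_compl {a b x : V} (hwa : ¬ G.Adj w a) (ha : a ≠ w)
    (hwb : ¬ G.Adj w b) (hb : b ≠ w) {p : G.Walk a b} (hp : IsWeaklyTollWalk G p)
    (hx : x ∈ p.support) : ¬ G.Adj w x := by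
  classical
  intro hwx
  let q := (p.takeUntil x hx).append (cons hwx.symm (cons hwx (p.dropUntil x hx)))
  have hsupp : ∀ y ∈ q.support, y = w ∨ y ∈ p.support := by
    intro y hy
    simp only [q, mem_support_append_iff, support_cons, List.mem_cons] at hy
    rcases hy with hy | rfl | rfl | hy
    · exact Or.inr (p.support_takeUntil_subset_support hx hy)
    · exact Or.inr hx
    · exact Or.inl rfl
    · exact Or.inr (p.support_dropUntil_subset_support hx hy)
  have hq : IsWeaklyTollWalk G q := by
    refine isWeaklyTollWalk_of_forall_adj_eq (y := p.snd) (z := p.penultimate) hp.1 hp.2.1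
      (fun y hy hay => ?_) (fun y hy hyb => ?_)
    · rcases hsupp y hy with rfl | hy
      · exact absurd hay.symm hwa
      · exact hp.2.2.1 y hy hay
    · rcases hsupp y hy with rfl | hy
      · exact absurd hyb hwb
      · exact hp.2.2.2 y hy hyb
  exact notMem_support_of_wtConvex_compl hw ha hb hq (by simp [q])

theorem notMem_wtInterval_of_forall_mem_support [Finite V] {u v : V}
    (hmax : ∀ a b : V, (wtInterval G {a, b}).ncard ≤ (wtInterval G {u, v}).ncard)
    (hwu : w ≠ u) (hwv : w ≠ v)
    (h : ∀ W : G.Walk u v, IsWeaklyTollWalk G W →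
      ∀ x ∈ W.support, x ≠ u → x ∈ wtInterval G {w, v}) :
    u ∉ wtInterval G {w, v} := by
  intro hu
  have hsub : wtInterval G {u, v} ⊆ wtInterval G {w, v} := by
    intro x hx
    rcases mem_wtInterval_pair.mp hx with rfl | rfl | ⟨W, hW, hxW⟩
    · exact hu
    · exact mem_wtInterval_pair.mpr (Or.inr (Or.inl rfl))
    · by_cases hxu : x = u
      · exact hxu ▸ hu
      · exact h W hW x hxW hxu
  have hssub : wtInterval G {u, v} ⊂ wtInterval G {w, v} :=
    (Set.ssubset_iff_of_subset hsub).mpr ⟨w, mem_wtInterval_pair.mpr (Or.inl rfl),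
      notMem_wtInterval_of_wtConvex_compl hw hwu.symm hwv.symm⟩
  have := Set.ncard_lt_ncard hssub
  have := hmax w v
  omega

theorem mem_wtInterval_of_adj_of_mem_support {u v x : V} (hwu : G.Adj w u)
    (hwv : ¬ G.Adj w v) (hnev : w ≠ v) {W : G.Walk u v} (hW : IsWeaklyTollWalk G W)
    (hx : x ∈ W.support) (hxu : x ≠ u) : x ∈ wtInterval G {w, v} := by
  have hwN : ∀ y, G.Adj w y → y ≠ u → G.Adj u y := fun y hwy hyu =>
    isClique_neighborSet_of_wtConvex_compl hw hwu hwy (Ne.symm hyu)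
  cases W with
  | nil => exact absurd rfl hW.1
  | @cons _ z _ huz W =>
  have hu : ∀ y ∈ (cons huz W).support, G.Adj u y → y = z := fun y hy huy => by
    simpa using hW.2.2.1 y hy huy
  have hxW : x ∈ W.support := by simpa [hxu] using hx
  by_cases hwz : G.Adj w z
  · obtain ⟨q, hq⟩ := W.exists_support_eq_diff huz.ne' hW.1.symm
      (fun y hy => hu y (by simp [hy]))
    have hqW : ∀ y ∈ q.support, y ∈ (cons huz W).support ∧ y ≠ u := fun y hy => by
      have := (hq y).mp hy
      exact ⟨by simp [this.1], this.2⟩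
    exact mem_wtInterval_of_mem_support
      (isWeaklyTollWalk_cons_of_forall_adj_eq hwz hnev hwv
        (fun y hy hwy => hu y (hqW y hy).1 (hwN y hwy (hqW y hy).2))
        (fun y hy hyv => hW.2.2.2 y (hqW y hy).1 hyv))
      (by simp [hq, hxW, hxu])
  · refine mem_wtInterval_of_mem_support
      (isWeaklyTollWalk_cons_of_forall_adj_eq (y := u) hwu hnev hwv (fun y hy hwy => ?_)
        hW.2.2.2) (by simp [hxW])
    by_contra hyu
    exact hwz (hu y hy (hwN y hwy hyu) ▸ hwy)

theorem mem_wtInterval_of_adj_of_adj_of_not_adj (hconn : G.Connected) {u v t : V}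
    (hwu : G.Adj w u) (hwv : ¬ G.Adj w v) (hnev : w ≠ v) (hnadj : ¬ G.Adj u v)
    (hut : G.Adj u t) (htw : t ≠ w) (hwt : ¬ G.Adj w t) : u ∈ wtInterval G {w, v} := by
  have htv : t ≠ v := by
    rintro rfl
    exact hnadj hut
  obtain ⟨P, hPw, z, hPz⟩ : ∃ P : G.Walk t v, (∀ x ∈ P.support, ¬ G.Adj w x) ∧
      ∃ z, ∀ x ∈ P.support, G.Adj x v → x = z := by
    by_cases htv' : G.Adj t v
    · refine ⟨cons htv' nil, ?_, t, ?_⟩ <;> simp [hwt, hwv]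
    · obtain ⟨P, hP⟩ := (hconn t v).exists_walk_length_eq_dist
      have hPwt := isWeaklyTollWalk_of_length_eq_dist hP htv htv'
      exact ⟨P, fun x hx => not_adj_of_mem_support_of_wtConvex_compl hw hwt htw hwv hnev.symm
        hPwt hx, _, hPwt.2.2.2⟩
  refine mem_wtInterval_of_mem_support
    (isWeaklyTollWalk_cons_of_forall_adj_eq (y := u) (z := z) (q := cons hut P) hwu hnev hwv
      (fun x hx hwx => ?_) (fun x hx hxv => ?_)) (by simp)
  all_goals
    rw [support_cons, List.mem_cons] at hx
    rcases hx with rfl | hx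
  · rfl
  · exact absurd hwx (hPw x hx)
  · exact absurd hxv hnadj
  · exact hPz x hx hxv

theorem closedNbhd_eq_of_adj [Finite V] (hconn : G.Connected) {u v : V}
    (hmax : ∀ a b : V, (wtInterval G {a, b}).ncard ≤ (wtInterval G {u, v}).ncard)
    (huv : u ≠ v) (hnadj : ¬ G.Adj u v) (hwu : G.Adj w u) : closedNbhd G w = closedNbhd G u := by
  have hclique := isClique_neighborSet_of_wtConvex_compl hw
  have hwv : ¬ G.Adj w v := fun hwv => hnadj (hclique hwu hwv huv)
  have hnev : w ≠ v := by
    rintro rfl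
    exact hnadj hwu.symm
  have hu : u ∉ wtInterval G {w, v} :=
    notMem_wtInterval_of_forall_mem_support hw hmax hwu.ne hnev
      fun _ hW _ hx hxu => mem_wtInterval_of_adj_of_mem_support hw hwu hwv hnev hW hx hxu
  have hNu : ∀ t, G.Adj u t → t = w ∨ G.Adj w t := fun t hut => by
    by_contra! ht
    exact hu (mem_wtInterval_of_adj_of_adj_of_not_adj hw hconn hwu hwv hnev hnadj hut ht.1 ht.2)
  ext y
  simp only [closedNbhd, Set.mem_insert_iff, mem_neighborSet]
  constructor
  · rintro (rfl | hwy)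
    · exact Or.inr hwu.symm
    · by_cases hyu : y = u
      · exact Or.inl hyu
      · exact Or.inr (hclique hwu hwy (Ne.symm hyu))
  · rintro (rfl | huy)
    · exact Or.inr hwu
    · exact hNu y huy

theorem false_of_walk_to_common_neighbor {u v s : V} (huv : u ≠ v) (hnadj : ¬ G.Adj u v)
    (hneu : w ≠ u) (hnev : w ≠ v) (hus : G.Adj u s) (hvs : G.Adj v s) (R : G.Walk w s)
    (hRuv : ∀ x ∈ R.support, x ≠ s → ¬ G.Adj u x ∧ ¬ G.Adj v x) : False := by
  let B := cons hus (R.reverse.append (R.append (cons hvs.symm nil)))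
  have hsupp : ∀ x ∈ B.support, x = u ∨ x ∈ R.support ∨ x = v := by
    intro x hx
    simp only [B, support_cons, List.mem_cons, mem_support_append_iff, support_reverse,
      List.mem_reverse, support_nil] at hx
    have := R.end_mem_support
    grind
  have hB : IsWeaklyTollWalk G B := by
    refine isWeaklyTollWalk_of_forall_adj_eq (y := s) (z := s) huv hnadj
      (fun x hx hux => ?_) (fun x hx hxv => ?_)
    all_goals
      rcases hsupp x hx with rfl | hx | rfl
      · first | exact absurd hux (G.loopless.irrefl _) | exact absurd hxv hnadj
      · by_contra hxs
        first | exact (hRuv x hx hxs).1 hux | exact (hRuv x hx hxs).2 hxv.symm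
      · first | exact absurd hux hnadj | exact absurd hxv (G.loopless.irrefl _)
  exact notMem_support_of_wtConvex_compl hw hneu.symm hnev.symm hB (by simp [B])

theorem false_of_walk_to_private_neighbor [Finite V] (hconn : G.Connected) {u v s : V}
    (hmax : ∀ a b : V, (wtInterval G {a, b}).ncard ≤ (wtInterval G {u, v}).ncard)
    (huv : u ≠ v) (hnadj : ¬ G.Adj u v) (hwu : ¬ G.Adj w u) (hneu : w ≠ u)
    (hwv : ¬ G.Adj w v) (hnev : w ≠ v) (hus : G.Adj u s) (hvs : ¬ G.Adj v s) (R : G.Walk w s)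
    (hRw : ∀ x ∈ R.support, G.Adj w x → x = R.snd)
    (hRuv : ∀ x ∈ R.support, x ≠ s → ¬ G.Adj u x ∧ ¬ G.Adj v x) : False := by
  have hext : ∀ W : G.Walk u v, IsWeaklyTollWalk G W →
      IsWeaklyTollWalk G (R.append (cons hus.symm W)) := by
    intro W hW
    have hsupp : ∀ x ∈ (R.append (cons hus.symm W)).support, x ∈ R.support ∨ x ∈ W.support := by
      intro x hx
      simp only [mem_support_append_iff, support_cons, List.mem_cons] at hx
      have := R.end_mem_support
      grind
    refine isWeaklyTollWalk_of_forall_adj_eq (y := R.snd) (z := W.penultimate) hnev hwv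
      (fun x hx hwx => ?_) (fun x hx hxv => ?_)
    · rcases hsupp x hx with hx | hx
      · exact hRw x hx hwx
      · exact absurd hwx (not_adj_of_mem_support_of_wtConvex_compl hw hwu hneu.symm hwv
          hnev.symm hW hx)
    · rcases hsupp x hx with hx | hx
      · by_cases hxs : x = s
        · exact absurd (hxs ▸ hxv.symm) hvs
        · exact absurd hxv.symm (hRuv x hx hxs).2
      · exact hW.2.2.2 x hx hxv
  obtain ⟨W, hW⟩ := (hconn u v).exists_walk_length_eq_dist
  exact notMem_wtInterval_of_forall_mem_support hw hmax hneu hnev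
    (fun W hW x hx _ => mem_wtInterval_of_mem_support (hext W hW) (by simp [hx]))
    (mem_wtInterval_of_mem_support (hext W (isWeaklyTollWalk_of_length_eq_dist hW huv hnadj))
      (by simp))

theorem false_of_not_adj_of_not_adj [Finite V] (hconn : G.Connected) {u v : V}
    (hmax : ∀ a b : V, (wtInterval G {a, b}).ncard ≤ (wtInterval G {u, v}).ncard)
    (huv : u ≠ v) (hnadj : ¬ G.Adj u v) (hwu : ¬ G.Adj w u) (hneu : w ≠ u)
    (hwv : ¬ G.Adj w v) (hnev : w ≠ v) : False := by
  classical
  let T := {s | G.Adj u s ∨ G.Adj v s}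
  obtain ⟨W, hW⟩ := (hconn u v).exists_walk_length_eq_dist
  obtain ⟨s, hsT, hsmin⟩ := Set.exists_min_image T (G.dist w) T.toFinite
    ⟨W.snd, Or.inl (W.adj_snd (not_nil_of_ne huv))⟩
  obtain ⟨R, hR⟩ := (hconn w s).exists_walk_length_eq_dist
  have hRuv : ∀ x ∈ R.support, x ≠ s → ¬ G.Adj u x ∧ ¬ G.Adj v x := by
    intro x hx hxs
    rw [← not_or]
    intro hxT
    have := hsmin x hxT
    have := G.dist_le (R.takeUntil x hx)
    have := R.length_takeUntil_lt_length hx hxs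
    omega
  have hRw := fun x hx => eq_snd_of_adj_of_length_eq_dist (x := x) hR hx
  by_cases hboth : G.Adj u s ∧ G.Adj v s
  · exact false_of_walk_to_common_neighbor hw huv hnadj hneu hnev hboth.1 hboth.2 R hRuv
  rcases hsT with hus | hvs
  · exact false_of_walk_to_private_neighbor hw hconn hmax huv hnadj hwu hneu hwv hnev hus
      (fun hvs => hboth ⟨hus, hvs⟩) R hRw hRuv
  · exact false_of_walk_to_private_neighbor hw hconn (Set.pair_comm u v ▸ hmax) huv.symm
      (fun h => hnadj h.symm) hwv hnev hwu hneu hvs (fun hus => hboth ⟨hus, hvs⟩) R hRw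
      (fun x hx hxs => (hRuv x hx hxs).symm)

end Extreme

end

/-- if `u,v` maximize the size of the weakly toll interval in a
connected non-complete graph, then every weakly toll extreme vertex of `G` is a
true twin of `u` or of `v` (or equals one of them). -/
theorem stmt12 [Fintype V] (G : SimpleGraph V) (hconn : G.Connected)
    (hnc : ∃ a b : V, a ≠ b ∧ ¬ G.Adj a b) (u v : V)
    (hmax : ∀ w z : V, (wtInterval G {w, z}).ncard ≤ (wtInterval G {u, v}).ncard)
    (w : V) (hw : WTConvex G ({w}ᶜ : Set V)) :
    closedNbhd G w = closedNbhd G u ∨ closedNbhd G w = closedNbhd G v := by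
  obtain ⟨a, b, hab, hnab⟩ := hnc
  obtain ⟨huv, hnadj⟩ := ne_and_not_adj_of_two_lt_ncard_wtInterval <|
    (three_le_ncard_wtInterval (hconn a b) hab hnab).trans (hmax a b)
  by_cases hwu : w = u
  · exact Or.inl (hwu ▸ rfl)
  by_cases hwv : w = v
  · exact Or.inr (hwv ▸ rfl)
  by_cases hadju : G.Adj w u
  · exact Or.inl (closedNbhd_eq_of_adj hw hconn hmax huv hnadj hadju)
  by_cases hadjv : G.Adj w v
  · exact Or.inr (closedNbhd_eq_of_adj hw hconn (Set.pair_comm u v ▸ hmax) huv.symm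
      (fun h => hnadj h.symm) hadjv)
  exact (false_of_not_adj_of_not_adj hw hconn hmax huv hnadj hadju hwu hadjv hwv).elim
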